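/- arXiv:1610.06130 — 3 statements merged into one kernel-verified Lean document; each statement's English description precedes it below -/
import Mathlib

section
/- In the Baumslag–Solitar group K = ⟨x, y | y⁻¹xy = x²⟩, if v and v' are two distinct words in the alphabet {y, yx} (i.e., distinct finite sequences of factors, each factor being y or yx), then v and v' represent distinct elements of K. -/
/-- The single relator `y⁻¹ x y (x²)⁻¹` of the Baumslag–Solitar group BS(1,2),
where `x` is generator `0` and `y` is generator `1`. -/
def bsRels : Set (FreeGroup (Fin 2)) :=
  {(FreeGroup.of 1)⁻¹ * FreeGroup.of 0 * FreeGroup.of 1 * ((FreeGroup.of 0) ^ 2)⁻¹}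

/-- The Baumslag–Solitar group `K = ⟨x, y | y⁻¹xy = x²⟩`. -/
abbrev BS := PresentedGroup bsRels

/-- The generator `x` of `K`. -/
def X : BS := PresentedGroup.of 0

/-- The generator `y` of `K`. -/
def Y : BS := PresentedGroup.of 1

/-- The element of `K` represented by a word in the alphabet `{y, yx}`:
a word is a list of factors, `false` standing for the factor `y` and `true`
for the factor `yx`; the list is read from left to right. -/
def wordElem (v : List Bool) : BS :=
  (v.map (fun b => if b then Y * X else Y)).prod

/-!
Let `K` act on `ℚ` by affine maps, `x` as `t ↦ t + 1` and `y` as `t ↦ t / 2`. The factors `y`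
and `yx` act as `t ↦ t / 2` and `t ↦ (t + 1) / 2`, so a word `v = b₁ ⋯ bₙ` acts as
`t ↦ t / 2ⁿ + 0.b₁b₂…bₙ` (in binary). Evaluating at `0` and `1` recovers both the binary number
`0.b₁…bₙ` and the length `n` of the word, and these two determine the word.
-/

/-- The binary fraction `0.b₁b₂…bₙ` of a list of bits `[b₁, …, bₙ]`. -/
def binaryValue : List Bool → ℚ
  | [] => 0
  | b :: v => (binaryValue v + if b then 1 else 0) / 2

lemma binaryValue_nonneg (v : List Bool) : 0 ≤ binaryValue v := by
  induction v with
  | nil => simp [binaryValue]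
  | cons b v ih => cases b <;> simp only [binaryValue] <;> positivity

lemma binaryValue_lt_one (v : List Bool) : binaryValue v < 1 := by
  induction v with
  | nil => simp [binaryValue]
  | cons b v ih => cases b <;> simp only [binaryValue] <;> norm_num <;> linarith

lemma eq_of_length_eq_of_binaryValue_eq {v w : List Bool} (hlen : v.length = w.length)
    (hval : binaryValue v = binaryValue w) : v = w := by
  induction v generalizing w with
  | nil => exact (List.length_eq_zero_iff.mp hlen.symm).symm
  | cons b v ih =>
    obtain _ | ⟨c, w⟩ := w
    · simp at hlen
    have hv := binaryValue_nonneg v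
    have hv' := binaryValue_lt_one v
    have hw := binaryValue_nonneg w
    have hw' := binaryValue_lt_one w
    -- The leading bit decides whether the value lies in `[0, 1/2)` or in `[1/2, 1)`.
    have hbit : b = c := by
      cases b <;> cases c <;> simp only [binaryValue] at hval <;> norm_num at hval ⊢ <;> linarith
    subst hbit
    have htail : binaryValue v = binaryValue w := by
      simp only [binaryValue] at hval
      linarith
    rw [ih (by simpa using hlen) htail]

def affineRep : BS →* Equiv.Perm ℚ :=
  PresentedGroup.toGroup (f := ![Equiv.addRight 1, Equiv.mulRight₀ 2⁻¹ (by norm_num)]) <| by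
    rintro r rfl
    simp only [map_mul, map_inv, map_pow, FreeGroup.lift_apply_of]
    rw [mul_inv_eq_one, mul_assoc, inv_mul_eq_iff_eq_mul]
    ext t
    simp only [Fin.isValue, Matrix.cons_val_zero, Matrix.cons_val_one, Matrix.cons_val_fin_one,
      Equiv.Perm.mul_apply, Equiv.mulRight₀_apply, Equiv.coe_addRight, Equiv.nsmul_addRight,
      nsmul_eq_mul, Nat.cast_ofNat]
    ring

lemma affineRep_X_apply (t : ℚ) : affineRep X t = t + 1 := by
  simp [affineRep, X, PresentedGroup.toGroup.of]

lemma affineRep_Y_apply (t : ℚ) : affineRep Y t = t / 2 := by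
  simp [affineRep, Y, PresentedGroup.toGroup.of, div_eq_mul_inv]

lemma affineRep_wordElem_apply (v : List Bool) (t : ℚ) :
    affineRep (wordElem v) t = t / 2 ^ v.length + binaryValue v := by
  induction v with
  | nil => simp [wordElem, binaryValue]
  | cons b v ih =>
    have hcons : wordElem (b :: v) = (if b then Y * X else Y) * wordElem v := by
      simp [wordElem]
    rw [hcons, map_mul, Equiv.Perm.mul_apply, ih]
    cases b <;>
      simp only [↓reduceIte, Bool.false_eq_true, map_mul, Equiv.Perm.coe_mul, Function.comp_apply,
        affineRep_X_apply, affineRep_Y_apply, List.length_cons, pow_succ, binaryValue, add_zero] <;>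
      ring

theorem stmt1 (v v' : List Bool) (h : v ≠ v') : wordElem v ≠ wordElem v' := by
  intro he
  have hact (t : ℚ) : t / 2 ^ v.length + binaryValue v = t / 2 ^ v'.length + binaryValue v' := by
    rw [← affineRep_wordElem_apply, ← affineRep_wordElem_apply, he]
  have hval : binaryValue v = binaryValue v' := by simpa using hact 0
  have hlen : v.length = v'.length := by
    have hpow : (2 : ℚ) ^ v.length = 2 ^ v'.length := by
      simpa [hval] using hact 1
    exact pow_right_injective₀ (by norm_num) (by norm_num) hpow
  exact h (eq_of_length_eq_of_binaryValue_eq hlen hval)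
end

section
/- Define words w_{n,m} over the alphabet {x, y, t} as follows: w_{n,0} = [y^{−E_n} x y^{E_n}, x³][y^{−E_n} x y^{E_n}, x⁵][y^{−E_n} x y^{E_n}, x⁷], and w_{n,m+1} is obtained from w_{n,m} by replacing each subword y^{±E_{n−m}} with t⁻¹ y^{−E_{n−m−1}} x^{±1} y^{E_{n−m−1}} t. Then the word w_n := w_{n,n} has length at most 100 · 2^n. -/
/-- The tower of exponentials: `expT 0 x = x`, `expT (m+1) x = 2 ^ expT m x`. -/
def expT : ℕ → ℕ → ℕ
  | 0, x => x
  | m + 1, x => 2 ^ expT m x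

/-- `E n = expT n 1`. -/
def E (n : ℕ) : ℕ := expT n 1

/-- A letter over the alphabet `{x, y, t}` together with a sign: the generator `x` is `0`,
`y` is `1`, `t` is `2`; `true` is the letter itself and `false` its formal inverse. -/
abbrev Ltr := Fin 3 × Bool

/-- The letter `x`. -/
def xL : Ltr := (0, true)

/-- The letter `y`. -/
def yL : Ltr := (1, true)

/-- The letter `t`. -/
def tL : Ltr := (2, true)

/-- Formal inverse of a word. -/
def invWord (w : List Ltr) : List Ltr := (w.map fun p => (p.1, !p.2)).reverse

/-- `P k` is the word obtained from `y^{E_k}` by applying `k` rounds of the substitution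
which replaces `y^{±E_j}` by `t⁻¹ y^{−E_{j−1}} x^{±1} y^{E_{j−1}} t`; note that the word
replacing `y^{-E_j}` is the formal inverse of the word replacing `y^{E_j}`. -/
def P : ℕ → List Ltr
  | 0 => [yL]
  | k + 1 => (2, false) :: (invWord (P k) ++ [xL] ++ P k ++ [tL])

/-- The word `x^k`. -/
def xPow (k : ℕ) : List Ltr := List.replicate k xL

/-- The commutator word `[a, b] = a b a⁻¹ b⁻¹`. -/
def commW (a b : List Ltr) : List Ltr := a ++ b ++ invWord a ++ invWord b

/-- The word obtained from `y^{−E_n} x y^{E_n}` after all `n` substitutions. -/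
def conjW (n : ℕ) : List Ltr := invWord (P n) ++ [xL] ++ P n

/-- The word `w_n = w_{n,n}`, obtained from
`w_{n,0} = [y^{−E_n} x y^{E_n}, x³][y^{−E_n} x y^{E_n}, x⁵][y^{−E_n} x y^{E_n}, x⁷]`
by the `n` rounds of substitution. -/
def wN (n : ℕ) : List Ltr :=
  commW (conjW n) (xPow 3) ++ commW (conjW n) (xPow 5) ++ commW (conjW n) (xPow 7)

/-! Each substitution round doubles the word `P k` and adds three letters, so
`|P k| = 4 · 2^k - 3`; the word `w_n` consists of six copies of `P n`, six of its
inverse and 36 letters `x`, so it has length exactly `48 · 2^n`. -/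

@[simp]
lemma invWord_length (w : List Ltr) : (invWord w).length = w.length := by
  simp [invWord]

@[simp]
lemma commW_length (a b : List Ltr) : (commW a b).length = 2 * (a.length + b.length) := by
  simp only [commW, List.length_append, invWord_length]
  ring

lemma P_length_add_three (k : ℕ) : (P k).length + 3 = 4 * 2 ^ k := by
  induction k with
  | zero => rfl
  | succ k ih =>
    simp only [P, List.length_cons, List.length_append, invWord_length, List.length_nil]
    rw [pow_succ]
    omega

lemma conjW_length_add_five (n : ℕ) : (conjW n).length + 5 = 8 * 2 ^ n := by
  have := P_length_add_three n
  simp only [conjW, List.length_append, invWord_length, List.length_singleton]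
  omega

lemma wN_length (n : ℕ) : (wN n).length = 48 * 2 ^ n := by
  have := conjW_length_add_five n
  simp only [wN, List.length_append, commW_length, xPow, List.length_replicate]
  omega

theorem stmt5 (n : ℕ) : (wN n).length ≤ 100 * 2 ^ n := by
  rw [wN_length]
  exact Nat.mul_le_mul_right _ (by norm_num)
end

section
/- Fix constants C₁, C₂, C₃. Let P be a presentation with C₁ generators and C₂ relators, each relator of length at most C₃·N·ln N. Introduce as new generators all words of length at most ⌊log₂(N/ln N)⌋ in the original generators and their inverses (with defining relators), and rewrite each original relator as a word in the new generators by partitioning it into blocks of length ⌊log₂(N/ln N)⌋. Then the resulting presentation P₀ presents the same group and has total length l(P₀) ≤ C₄·N, where C₄ depends only on C₁, C₂, C₃ and not on N, for all sufficiently large N. -/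
/-- A word over `n` generators: a list of signed letters. -/
abbrev Word (n : ℕ) := List (Fin n × Bool)

/-- Formal inverse of a word. -/
def invW {n : ℕ} (w : Word n) : Word n := (w.map fun p => (p.1, !p.2)).reverse

/-- A finite presentation: `n` generators and a finite list of relator words. -/
structure Pres where
  n : ℕ
  rels : List (Word n)

/-- The set of relators of a presentation, as elements of the free group. -/
def Pres.relSet (P : Pres) : Set (FreeGroup (Fin P.n)) :=
  {r | ∃ w ∈ P.rels, r = FreeGroup.mk w}

/-- The group presented by `P`. -/
abbrev Pres.group (P : Pres) := PresentedGroup P.relSet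

/-- The length of a presentation: the sum of the lengths of the relators plus the
number of generators. -/
def Pres.len (P : Pres) : ℕ := P.n + (P.rels.map List.length).sum

/-- Push a word over `n` generators to a word over `n + 1` generators. -/
def liftW {n : ℕ} (w : Word n) : Word (n + 1) := w.map fun p => (p.1.castSucc, p.2)

/-- Elementary Tietze transformations with parameter `d`:
`op1` inserts a cancelling pair `x^ε x^{-ε}` into a relator (and `op1inv` deletes one);
`op2` cyclically permutes a relator; `op3` inverts a relator; `op4` replaces the relator
`a_i` by `a_i * a_j` for `i ≠ j`; `op5` adds a new generator `x` together with the relator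
`x·w`, where `w` is a word in the old generators of length at most `d - 1` (and `op5inv`
is its inverse); `op6` adds the empty relator (and `op6inv` removes it). -/
inductive TStep (d : ℕ) : Pres → Pres → Prop
  | op1 {n} (A B : List (Word n)) (a' a'' : Word n) (j : Fin n) (ε : Bool) :
      TStep d ⟨n, A ++ (a' ++ a'') :: B⟩ ⟨n, A ++ (a' ++ (j, ε) :: (j, !ε) :: a'') :: B⟩
  | op1inv {n} (A B : List (Word n)) (a' a'' : Word n) (j : Fin n) (ε : Bool) :
      TStep d ⟨n, A ++ (a' ++ (j, ε) :: (j, !ε) :: a'') :: B⟩ ⟨n, A ++ (a' ++ a'') :: B⟩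
  | op2 {n} (A B : List (Word n)) (a : Word n) (k : ℕ) :
      TStep d ⟨n, A ++ a :: B⟩ ⟨n, A ++ a.rotate k :: B⟩
  | op3 {n} (A B : List (Word n)) (a : Word n) :
      TStep d ⟨n, A ++ a :: B⟩ ⟨n, A ++ invW a :: B⟩
  | op4 {n} (rels : List (Word n)) (i j : Fin rels.length) (hij : i ≠ j) :
      TStep d ⟨n, rels⟩ ⟨n, rels.set i (rels.get i ++ rels.get j)⟩
  | op5 {n} (rels : List (Word n)) (w : Word n) (hw : w.length ≤ d - 1) :
      TStep d ⟨n, rels⟩ ⟨n + 1, rels.map liftW ++ [((Fin.last n, true) :: liftW w)]⟩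
  | op5inv {n} (rels : List (Word n)) (w : Word n) (hw : w.length ≤ d - 1) :
      TStep d ⟨n + 1, rels.map liftW ++ [((Fin.last n, true) :: liftW w)]⟩ ⟨n, rels⟩
  | op6 {n} (rels : List (Word n)) : TStep d ⟨n, rels⟩ ⟨n, rels ++ [[]]⟩
  | op6inv {n} (rels : List (Word n)) : TStep d ⟨n, rels ++ [[]]⟩ ⟨n, rels⟩

/-- `TLe d N P Q`: `P` can be transformed into `Q` by at most `N` elementary Tietze
transformations with parameter `d`. -/
inductive TLe (d : ℕ) : ℕ → Pres → Pres → Prop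
  | refl (N : ℕ) (P : Pres) : TLe d N P P
  | step {N : ℕ} {P Q R : Pres} : TStep d P Q → TLe d N Q R → TLe d (N + 1) P R

/-!
Fix the word length `L = ⌊log_b N⌋` with `b = 4 C₁ + 2`. Introduce one new generator `x_B`
together with the relator `x_B⁻¹ B` for every block `B` of length at most `L` occurring when
the relators are cut into consecutive blocks of length `L`, and replace every block by its
generator; this Tietze transformation does not change the group. There are at most
`(2 C₁ + 1)^L` words of length at most `L`, so the defining relators have total length at most
`(2 C₁ + 1)^L (L + 1) ≤ b^L ≤ N`, while a relator of length `≤ C₃ N ln N` becomes a word of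
length `≤ C₃ N ln N / L + 1 = O(N)`, because `ln N ≤ 2 L ln b`.
-/

namespace PresentedGroup

variable {α β : Type*} {R : Set (FreeGroup α)} {S : Set (FreeGroup β)}

theorem nonempty_mulEquiv_of_comp_eq_id (ι : FreeGroup α →* FreeGroup β)
    (σ : FreeGroup β →* FreeGroup α) (hσι : σ.comp ι = MonoidHom.id _)
    (hισ : ∀ b, mk S (ι (σ (.of b))) = of b) (hRS : R ⊆ σ '' S)
    (hSR : ∀ s ∈ S, mk R (σ s) = 1) :
    Nonempty (PresentedGroup R ≃* PresentedGroup S) := by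
  have hR : ∀ r ∈ R, FreeGroup.lift (FreeGroup.lift.symm ((mk S).comp ι)) r = 1 := by
    intro _ hr
    obtain ⟨s, hs, rfl⟩ := hRS hr
    rw [Equiv.apply_symm_apply]
    exact (DFunLike.congr_fun (FreeGroup.ext_hom ((mk S).comp (ι.comp σ)) _ hισ) s).trans
      (one_of_mem hs)
  have hS : ∀ s ∈ S, FreeGroup.lift (FreeGroup.lift.symm ((mk R).comp σ)) s = 1 := by
    simpa only [Equiv.apply_symm_apply, MonoidHom.comp_apply] using hSR
  refine ⟨MonoidHom.toMulEquiv (toGroup hR) (toGroup hS) ?_ ?_⟩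
  · ext a
    calc toGroup hS (toGroup hR (of a))
        = toGroup hS (mk S (ι (.of a))) := by rw [toGroup.of]; rfl
      _ = FreeGroup.lift (FreeGroup.lift.symm ((mk R).comp σ)) (ι (.of a)) := rfl
      _ = mk R (σ (ι (.of a))) := by rw [Equiv.apply_symm_apply]; rfl
      _ = of a := congrArg (mk R) (DFunLike.congr_fun hσι (.of a))
  · ext b
    calc toGroup hR (toGroup hS (of b))
        = toGroup hR (mk R (σ (.of b))) := by rw [toGroup.of]; rfl
      _ = FreeGroup.lift (FreeGroup.lift.symm ((mk S).comp ι)) (σ (.of b)) := rfl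
      _ = of b := by rw [Equiv.apply_symm_apply]; exact hισ b

end PresentedGroup

namespace List

variable {α : Type*}

/-- `l` cut into `l.length / n + 1` consecutive blocks of length `n`; the last block is
shorter, possibly empty. -/
def blocks (n : ℕ) (l : List α) : List (List α) :=
  (replicate (l.length / n + 1) n).splitLengths l

@[simp]
theorem length_blocks (n : ℕ) (l : List α) : (l.blocks n).length = l.length / n + 1 := by
  simp [blocks]

theorem flatten_blocks {n : ℕ} (hn : 0 < n) (l : List α) : (l.blocks n).flatten = l :=
  flatten_splitLengths _ _ (by simpa [Nat.mul_add, mul_comm] using (Nat.lt_div_mul_add hn).le)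

theorem length_le_of_mem_blocks {n : ℕ} {l B : List α} (hB : B ∈ l.blocks n) : B.length ≤ n :=
  length_mem_splitLengths l _ n (fun _ hm => (eq_of_mem_replicate hm).le) B hB

theorem Nodup.length_le_card_add_one_pow [Fintype α] {ws : List (List α)} {n : ℕ}
    (hws : ws.Nodup) (hn : ∀ w ∈ ws, w.length ≤ n) :
    ws.length ≤ (Fintype.card α + 1) ^ n := by
  have hinj : ∀ v ∈ ws, ∀ w ∈ ws, (fun i : Fin n => v[i]?) = (fun i => w[i]?) → v = w := by
    intro v hv w hw h
    ext1 i
    by_cases hi : i < n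
    · exact congrFun h ⟨i, hi⟩
    · rw [getElem?_eq_none (by grind), getElem?_eq_none (by grind)]
  calc ws.length = (ws.map fun w (i : Fin n) => w[i]?).length := (length_map _).symm
    _ ≤ Fintype.card (Fin n → Option α) := (hws.map_on hinj).length_le_card
    _ = (Fintype.card α + 1) ^ n := by simp

end List

def castWord {c : ℕ} (m : ℕ) (w : Word c) : Word (c + m) :=
  w.map fun p => (Fin.castAdd m p.1, p.2)

theorem mk_castWord {c : ℕ} (m : ℕ) (w : Word c) :
    FreeGroup.mk (castWord m w) = FreeGroup.map (Fin.castAdd m) (FreeGroup.mk w) :=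
  FreeGroup.map.mk.symm

namespace Pres

variable (P : Pres)

section Abbreviation

variable (Bs : List (Word P.n))

def expand : FreeGroup (Fin (P.n + Bs.length)) →* FreeGroup (Fin P.n) :=
  FreeGroup.lift (Fin.addCases FreeGroup.of fun j => FreeGroup.mk Bs[j])

def abbrevRel (j : Fin Bs.length) : Word (P.n + Bs.length) :=
  (Fin.natAdd P.n j, false) :: castWord Bs.length Bs[j]

def abbrevLetter (B : Word P.n) : Word (P.n + Bs.length) :=
  ((Bs.finIdxOf? B).map fun j => (Fin.natAdd P.n j, true)).toList

def abbreviate (L : ℕ) (r : Word P.n) : Word (P.n + Bs.length) :=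
  (r.blocks L).flatMap (abbrevLetter P Bs)

/-- Generator `P.n + j` abbreviates `Bs[j]`. Each relator is cut into blocks of length `L` and
each block is replaced by its abbreviation; a block missing from `Bs` is simply dropped. -/
def withAbbrevs (L : ℕ) : Pres :=
  ⟨P.n + Bs.length,
    (List.finRange Bs.length).map (abbrevRel P Bs) ++ P.rels.map (abbreviate P Bs L)⟩

@[simp]
theorem expand_of_castAdd (i : Fin P.n) :
    expand P Bs (.of (Fin.castAdd Bs.length i)) = .of i := by
  simp [expand]

@[simp]
theorem expand_of_natAdd (j : Fin Bs.length) :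
    expand P Bs (.of (Fin.natAdd P.n j)) = .mk Bs[j] := by
  simp [expand]

theorem expand_comp_map_castAdd :
    (expand P Bs).comp (FreeGroup.map (Fin.castAdd Bs.length)) = MonoidHom.id _ :=
  FreeGroup.ext_hom _ _ fun i => by simp

theorem mk_abbrevRel (j : Fin Bs.length) :
    FreeGroup.mk (abbrevRel P Bs j) = (FreeGroup.of (Fin.natAdd P.n j))⁻¹
      * FreeGroup.map (Fin.castAdd _) (FreeGroup.mk Bs[j]) := by
  rw [abbrevRel, ← mk_castWord]
  rfl

theorem expand_mk_abbrevRel (j : Fin Bs.length) :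
    expand P Bs (FreeGroup.mk (abbrevRel P Bs j)) = 1 := by
  rw [mk_abbrevRel, map_mul, map_inv, ← MonoidHom.comp_apply _ (FreeGroup.map _),
    expand_comp_map_castAdd]
  simp only [expand_of_natAdd, MonoidHom.id_apply, inv_mul_cancel]

theorem expand_mk_abbrevLetter {B : Word P.n} (hB : B ∈ Bs) :
    expand P Bs (FreeGroup.mk (abbrevLetter P Bs B)) = FreeGroup.mk B := by
  cases hj : Bs.finIdxOf? B with
  | none => exact absurd hB (List.finIdxOf?_eq_none_iff.mp hj)
  | some j =>
    rw [abbrevLetter, hj, ← (List.finIdxOf?_eq_some_iff.mp hj).1]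
    simp [expand]

theorem expand_mk_flatMap_abbrevLetter {Cs : List (Word P.n)} (hCs : ∀ B ∈ Cs, B ∈ Bs) :
    expand P Bs (FreeGroup.mk (Cs.flatMap (abbrevLetter P Bs))) = FreeGroup.mk Cs.flatten := by
  induction Cs with
  | nil => rfl
  | cons B Cs ih =>
    simp only [List.mem_cons, forall_eq_or_imp] at hCs
    rw [List.flatMap_cons, List.flatten_cons, ← FreeGroup.mul_mk, ← FreeGroup.mul_mk, map_mul,
      expand_mk_abbrevLetter P Bs hCs.1, ih hCs.2]

theorem expand_mk_abbreviate {L : ℕ} (hL : 0 < L) {r : Word P.n}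
    (hr : ∀ B ∈ r.blocks L, B ∈ Bs) :
    expand P Bs (FreeGroup.mk (abbreviate P Bs L r)) = FreeGroup.mk r := by
  rw [abbreviate, expand_mk_flatMap_abbrevLetter P Bs hr, List.flatten_blocks hL]

theorem of_natAdd_eq_mk (L : ℕ) (j : Fin Bs.length) :
    PresentedGroup.of (rels := (withAbbrevs P Bs L).relSet) (Fin.natAdd P.n j)
      = PresentedGroup.mk _ (FreeGroup.map (Fin.castAdd _) (FreeGroup.mk Bs[j])) :=
  PresentedGroup.mk_eq_mk_of_inv_mul_mem
    ⟨abbrevRel P Bs j, List.mem_append_left _ (List.mem_map_of_mem (List.mem_finRange j)),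
      (mk_abbrevRel P Bs j).symm⟩

theorem nonempty_mulEquiv_withAbbrevs {L : ℕ} (hL : 0 < L)
    (hBs : ∀ r ∈ P.rels, ∀ B ∈ r.blocks L, B ∈ Bs) :
    Nonempty (PresentedGroup P.relSet ≃* PresentedGroup (withAbbrevs P Bs L).relSet) := by
  refine PresentedGroup.nonempty_mulEquiv_of_comp_eq_id _ (expand P Bs)
    (expand_comp_map_castAdd P Bs) (fun b => ?_) ?_ ?_
  · induction b using Fin.addCases with
    | left i =>
      show PresentedGroup.mk _ (FreeGroup.map _ (expand P Bs (.of (Fin.castAdd _ i)))) = _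
      rw [expand_of_castAdd]
      rfl
    | right j =>
      show PresentedGroup.mk _ (FreeGroup.map _ (expand P Bs (.of (Fin.natAdd _ j)))) = _
      rw [expand_of_natAdd]
      exact (of_natAdd_eq_mk P Bs L j).symm
  · rintro _ ⟨r, hr, rfl⟩
    exact ⟨_, ⟨abbreviate P Bs L r, List.mem_append_right _ (List.mem_map_of_mem hr), rfl⟩,
      expand_mk_abbreviate P Bs hL (hBs r hr)⟩
  · rintro _ ⟨u, hu, rfl⟩
    rcases List.mem_append.mp hu with hu | hu
    · obtain ⟨j, -, rfl⟩ := List.mem_map.mp hu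
      show PresentedGroup.mk _ (expand P Bs (.mk (abbrevRel P Bs j))) = 1
      rw [expand_mk_abbrevRel, map_one]
    · obtain ⟨r, hr, rfl⟩ := List.mem_map.mp hu
      show PresentedGroup.mk _ (expand P Bs (.mk (abbreviate P Bs L r))) = 1
      rw [expand_mk_abbreviate P Bs hL (hBs r hr)]
      exact PresentedGroup.one_of_mem ⟨r, hr, rfl⟩

@[simp]
theorem length_abbrevRel (j : Fin Bs.length) : (abbrevRel P Bs j).length = Bs[j].length + 1 := by
  simp [abbrevRel, castWord]

theorem length_abbreviate_le (L : ℕ) (r : Word P.n) :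
    (abbreviate P Bs L r).length ≤ r.length / L + 1 := by
  rw [abbreviate, List.length_flatMap, ← List.length_blocks L r]
  simpa using List.sum_le_card_nsmul ((r.blocks L).map fun B => (abbrevLetter P Bs B).length) 1
    (List.forall_mem_map.mpr fun _ _ => Option.length_toList_le)

theorem len_withAbbrevs_le {L : ℕ} (hBs : ∀ B ∈ Bs, B.length ≤ L) :
    (withAbbrevs P Bs L).len
      ≤ P.n + Bs.length * (L + 2) + (P.rels.map fun r => r.length / L + 1).sum := by
  have hrel := List.sum_le_card_nsmul
    ((List.finRange Bs.length).map fun j => (abbrevRel P Bs j).length) (L + 1)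
    (List.forall_mem_map.mpr fun j _ => by simpa using hBs _ (List.getElem_mem j.isLt))
  have hrels := List.sum_le_sum fun r (_ : r ∈ P.rels) => length_abbreviate_le P Bs L r
  simp only [len, withAbbrevs, List.map_append, List.map_map, List.sum_append,
    Function.comp_def, List.length_map, List.length_finRange, smul_eq_mul] at hrel hrels ⊢
  linarith

end Abbreviation

def blockDict (L : ℕ) : List (Word P.n) := (P.rels.flatMap (List.blocks L)).dedup

theorem mem_blockDict {L : ℕ} {r B : Word P.n} (hr : r ∈ P.rels) (hB : B ∈ r.blocks L) :
    B ∈ P.blockDict L :=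
  List.mem_dedup.mpr (List.mem_flatMap.mpr ⟨r, hr, hB⟩)

theorem length_le_of_mem_blockDict {L : ℕ} {B : Word P.n} (hB : B ∈ P.blockDict L) :
    B.length ≤ L := by
  obtain ⟨r, -, hB⟩ := List.mem_flatMap.mp (List.mem_dedup.mp hB)
  exact List.length_le_of_mem_blocks hB

theorem length_blockDict_mul_le (L : ℕ) :
    (P.blockDict L).length * (L + 2) ≤ 2 * (4 * P.n + 2) ^ L :=
  calc (P.blockDict L).length * (L + 2) ≤ (2 * P.n + 1) ^ L * 2 ^ (L + 1) := by
        refine Nat.mul_le_mul ?_ Nat.lt_two_pow_self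
        simpa [blockDict, mul_comm] using
          (List.nodup_dedup _).length_le_card_add_one_pow fun _ => P.length_le_of_mem_blockDict
    _ = 2 * (4 * P.n + 2) ^ L := by
        rw [show 4 * P.n + 2 = (2 * P.n + 1) * 2 by ring, mul_pow, pow_succ]
        ring

end Pres

theorem Real.log_le_two_mul_natLog_mul_log {b N : ℕ} (hb : 1 < b) (hN : b ≤ N) :
    Real.log N ≤ 2 * Nat.log b N * Real.log b := by
  have hL : (1 : ℝ) ≤ Nat.log b N := by exact_mod_cast Nat.log_pos hb hN
  have hN0 : (0 : ℝ) < N := by exact_mod_cast (by omega : 0 < N)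
  have hlogb : 0 < Real.log b := Real.log_pos (by exact_mod_cast hb)
  have hlt : (N : ℝ) < (b : ℝ) ^ (Nat.log b N + 1) := by
    exact_mod_cast Nat.lt_pow_succ_log_self hb N
  have := Real.log_lt_log hN0 hlt
  rw [Real.log_pow] at this
  push_cast at this
  nlinarith

theorem natCast_div_natLog_add_one_le {b N ℓ : ℕ} {C : ℝ} (hb : 1 < b) (hN : b ≤ N)
    (hC : 0 ≤ C) (hℓ : (ℓ : ℝ) ≤ C * N * Real.log N) :
    ((ℓ / Nat.log b N + 1 : ℕ) : ℝ) ≤ 2 * C * Real.log b * N + 1 := by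
  have hL : (0 : ℝ) < Nat.log b N := by exact_mod_cast Nat.log_pos hb hN
  have hCN : (0 : ℝ) ≤ C * N := by positivity
  have hlog := Real.log_le_two_mul_natLog_mul_log hb hN
  calc ((ℓ / Nat.log b N + 1 : ℕ) : ℝ) ≤ ℓ / Nat.log b N + 1 := by
        push_cast; gcongr; exact Nat.cast_div_le
    _ ≤ C * N * Real.log N / Nat.log b N + 1 := by gcongr
    _ ≤ 2 * C * Real.log b * N + 1 := by
        gcongr
        rw [div_le_iff₀ hL]
        nlinarith

theorem Pres.len_withAbbrevs_blockDict_le (P : Pres) {C : ℝ} (hC : 0 ≤ C) {N : ℕ}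
    (hN : 4 * P.n + 2 ≤ N) (hlen : ∀ r ∈ P.rels, (r.length : ℝ) ≤ C * N * Real.log N) :
    ((P.withAbbrevs (P.blockDict (Nat.log (4 * P.n + 2) N)) (Nat.log (4 * P.n + 2) N)).len : ℝ)
      ≤ P.n + 2 * N + P.rels.length * (2 * C * Real.log (4 * P.n + 2 : ℕ) * N + 1) := by
  set L := Nat.log (4 * P.n + 2) N
  have hdict : (P.blockDict L).length * (L + 2) ≤ 2 * N :=
    (P.length_blockDict_mul_le L).trans
      (Nat.mul_le_mul_left 2 (Nat.pow_log_le_self _ (by omega)))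
  have hrels : ((P.rels.map fun r => r.length / L + 1).sum : ℝ)
      ≤ P.rels.length * (2 * C * Real.log (4 * P.n + 2 : ℕ) * N + 1) := by
    have := List.sum_le_card_nsmul (P.rels.map fun r => ((r.length / L + 1 : ℕ) : ℝ)) _
      (List.forall_mem_map.mpr fun r hr =>
        natCast_div_natLog_add_one_le (by omega) hN hC (hlen r hr))
    rw [List.length_map, nsmul_eq_mul] at this
    rw [Nat.cast_list_sum, List.map_map]
    exact this
  have htotal := P.len_withAbbrevs_le (P.blockDict L) fun _ => P.length_le_of_mem_blockDict
  have : ((P.blockDict L).length * (L + 2) : ℝ) ≤ 2 * N := by exact_mod_cast hdict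
  have : ((P.withAbbrevs (P.blockDict L) L).len : ℝ) ≤ P.n + (P.blockDict L).length * (L + 2)
      + ((P.rels.map fun r => r.length / L + 1).sum : ℕ) := by exact_mod_cast htotal
  linarith

theorem stmt14 (C₁ C₂ : ℕ) (C₃ : ℝ) (hC₃ : 0 < C₃) :
    ∃ (C₄ : ℝ) (N₀ : ℕ), ∀ N : ℕ, N ≥ N₀ → ∀ P : Pres,
      P.n = C₁ → P.rels.length = C₂ →
      (∀ r ∈ P.rels, (r.length : ℝ) ≤ C₃ * N * Real.log N) →
      ∃ P₀ : Pres,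
        Nonempty (PresentedGroup P.relSet ≃* PresentedGroup P₀.relSet) ∧
        (P₀.len : ℝ) ≤ C₄ * N := by
  refine ⟨C₁ + 2 + C₂ * (2 * C₃ * Real.log (4 * C₁ + 2 : ℕ) + 1), 4 * C₁ + 2,
    fun N hN P hn hcard hlen => ?_⟩
  subst hn hcard
  have hL : 0 < Nat.log (4 * P.n + 2) N := Nat.log_pos (by omega) hN
  refine ⟨_, P.nonempty_mulEquiv_withAbbrevs _ hL fun _ hr _ hB => P.mem_blockDict hr hB,
    (P.len_withAbbrevs_blockDict_le hC₃.le hN hlen).trans ?_⟩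
  have hN1 : (1 : ℝ) ≤ N := by exact_mod_cast (by omega : 1 ≤ N)
  have hlogb : 0 ≤ Real.log (4 * P.n + 2 : ℕ) := Real.log_natCast_nonneg _
  have : (0 : ℝ) ≤ P.rels.length := by positivity
  nlinarith
end
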